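/- arXiv:2202.09295 — 5 statements merged into one kernel-verified Lean document; each statement's English description precedes it below -/
import Mathlib

section
/- Let (X,d,μ) be a metric measure space and p ∈ [1,∞). Suppose μ satisfies a uniform comparability condition with parameters r₀, C. Then for every r ∈ (0,r₀) the averaging operator A_r, defined by A_r f(x) := ⨍_{B_r(x)} f dμ, maps L^p(X,μ) boundedly into itself with operator norm at most C^{1/p}. -/
/-
By Jensen's inequality `|A_r f x|^p ≤ ⨍_{B_r(x)} |f|^p`. Integrating in `x` and exchanging the
order of integration, `∫ |A_r f|^p ≤ ∫ |f y|^p (∫_{B_r(y)} μ(B_r(x))⁻¹ dμ(x)) dμ(y) ≤ C ∫ |f|^p`,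
because `μ(B_r(x)) ≥ μ(B_r(y)) / C` for a.e. `x ∈ B_r(y)`.

Tonelli's theorem applies because `X` is separable: `μ` is σ-finite, being finite on balls, so
only countably many disjoint balls can have positive measure, and a maximal `ε`-separated set,
whose `ε / 2`-balls are disjoint, is countable. Hence `dist` is measurable on `X × X`.
-/

open MeasureTheory Metric Set
open scoped ENNReal

theorem MeasureTheory.enorm_setAverage_rpow_le {α E : Type*} [MeasurableSpace α]
    [NormedAddCommGroup E] [NormedSpace ℝ E] (μ : Measure α) {s : Set α} (h0 : μ s ≠ 0)
    (htop : μ s ≠ ∞) {t : ℝ} (ht : 1 ≤ t) {f : α → E} (hf : AEStronglyMeasurable f (μ.restrict s)) :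
    ‖⨍ x in s, f x ∂μ‖ₑ ^ t ≤ (μ s)⁻¹ * ∫⁻ x in s, ‖f x‖ₑ ^ t ∂μ := by
  have : IsFiniteMeasure (μ.restrict s) := isFiniteMeasure_restrict.2 htop
  have : NeZero (μ.restrict s) := ⟨by simpa using h0⟩
  set ν := (μ.restrict s univ)⁻¹ • μ.restrict s
  have ht0 : 0 < t := zero_lt_one.trans_le ht
  have hJensen : ‖⨍ x in s, f x ∂μ‖ₑ ≤ eLpNorm' f t ν :=
    calc ‖⨍ x in s, f x ∂μ‖ₑ ≤ ∫⁻ x, ‖f x‖ₑ ∂ν := enorm_integral_le_lintegral_enorm f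
      _ = eLpNorm' f 1 ν := by simp [eLpNorm'_eq_lintegral_enorm]
      _ ≤ eLpNorm' f t ν :=
        eLpNorm'_le_eLpNorm'_of_exponent_le one_pos ht ν (hf.smul_measure _)
  calc ‖⨍ x in s, f x ∂μ‖ₑ ^ t ≤ eLpNorm' f t ν ^ t := ENNReal.rpow_le_rpow hJensen ht0.le
    _ = (μ s)⁻¹ * ∫⁻ x in s, ‖f x‖ₑ ^ t ∂μ := by
      rw [← lintegral_rpow_enorm_eq_rpow_eLpNorm' ht0, lintegral_smul_measure,
        Measure.restrict_apply_univ, smul_eq_mul]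

theorem MeasureTheory.eLpNorm_le_rpow_mul_eLpNorm_of_lintegral_le {α β ε ε' : Type*}
    [MeasurableSpace α] [MeasurableSpace β] [ENorm ε] [ENorm ε'] {μ : Measure α} {ν : Measure β}
    {p : ℝ≥0∞} (hp0 : p ≠ 0) (hp : p ≠ ∞) {c : ℝ≥0∞} {g : α → ε} {f : β → ε'}
    (h : ∫⁻ x, ‖g x‖ₑ ^ p.toReal ∂μ ≤ c * ∫⁻ y, ‖f y‖ₑ ^ p.toReal ∂ν) :
    eLpNorm g p μ ≤ c ^ (1 / p.toReal) * eLpNorm f p ν := by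
  rw [eLpNorm_eq_lintegral_rpow_enorm_toReal hp0 hp, eLpNorm_eq_lintegral_rpow_enorm_toReal hp0 hp,
    ← ENNReal.mul_rpow_of_nonneg _ _ (by positivity)]
  gcongr

theorem Metric.exists_maximal_isSeparated {X : Type*} [PseudoEMetricSpace X] (ε : ℝ≥0∞) :
    ∃ N : Set X, Maximal (fun N => N ⊆ univ ∧ IsSeparated ε N) N := by
  obtain ⟨N, hN⟩ := zorn_subset {N : Set X | IsSeparated ε N} fun c hc hchain =>
    ⟨⋃₀ c, hchain.pairwise_sUnion.2 hc, fun _ => subset_sUnion_of_mem⟩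
  exact ⟨N, by simpa using hN⟩

theorem MeasureTheory.sigmaFinite_of_measure_ball_lt_top {X : Type*} [PseudoMetricSpace X]
    [MeasurableSpace X] (μ : Measure X)
    (hμ : ∀ (x : X) (r : ℝ), 0 < r → μ (ball x r) < ∞) : SigmaFinite μ := by
  rcases isEmpty_or_nonempty X with hX | ⟨⟨x₀⟩⟩
  · infer_instance
  refine Measure.sigmaFinite_of_countable (countable_range fun n : ℕ => ball x₀ (n + 1)) ?_ ?_
  · rintro _ ⟨n, rfl⟩
    exact hμ x₀ _ n.cast_add_one_pos
  · rw [sUnion_range, iUnion_ball_nat_succ]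

section

variable {X : Type*} [PseudoMetricSpace X] [MeasurableSpace X] [OpensMeasurableSpace X]

theorem Metric.IsSeparated.countable_of_measure_ball_pos (μ : Measure X) [SFinite μ]
    (hμ : ∀ (x : X) (r : ℝ), 0 < r → 0 < μ (ball x r)) {ε : ℝ} (hε : 0 < ε) {N : Set X}
    (hN : IsSeparated (ENNReal.ofReal ε) N) : N.Countable := by
  have hdisj : Pairwise (Function.onFun Disjoint fun y : N => ball (y : X) (ε / 2)) := by
    intro a b hab
    refine ball_disjoint_ball ?_
    have : ENNReal.ofReal ε < edist (a : X) b := hN a.2 b.2 (Subtype.coe_ne_coe.2 hab)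
    rw [edist_dist, ENNReal.ofReal_lt_ofReal_iff_of_nonneg hε.le] at this
    linarith
  have := Measure.countable_meas_pos_of_disjoint_iUnion (μ := μ) (fun _ => measurableSet_ball) hdisj
  exact countable_coe_iff.1 <| countable_univ_iff.1 <|
    this.mono fun y _ => hμ y _ (half_pos hε)

theorem MeasureTheory.secondCountableTopology_of_measure_ball_pos (μ : Measure X) [SFinite μ]
    (hμ : ∀ (x : X) (r : ℝ), 0 < r → 0 < μ (ball x r)) : SecondCountableTopology X := by
  refine secondCountable_of_almost_dense_set fun ε hε => ?_
  obtain ⟨N, hN⟩ := exists_maximal_isSeparated (X := X) (ENNReal.ofReal ε)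
  have hcover : IsCover ε.toNNReal univ N := IsCover.of_maximal_isSeparated hN
  refine ⟨N, hN.1.2.countable_of_measure_ball_pos μ hμ hε, fun x => ?_⟩
  obtain ⟨y, hy, hxy⟩ := hcover (mem_univ x)
  have : edist x y ≤ ENNReal.ofReal ε := hxy
  rw [edist_dist, ENNReal.ofReal_le_ofReal_iff hε.le] at this
  exact ⟨y, hy, this⟩

variable [SecondCountableTopology X] (μ : Measure X) [SFinite μ]

theorem measurableSet_dist_lt (r : ℝ) : MeasurableSet {z : X × X | dist z.2 z.1 < r} :=
  measurableSet_lt (measurable_snd.dist measurable_fst) measurable_const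

theorem measurable_measure_ball (r : ℝ) : Measurable fun x => μ (ball x r) :=
  measurable_measure_prodMk_left (measurableSet_dist_lt r)

theorem aestronglyMeasurable_setAverage_ball {E : Type*} [NormedAddCommGroup E] [NormedSpace ℝ E]
    {f : X → E} (hf : AEStronglyMeasurable f μ) (r : ℝ) :
    AEStronglyMeasurable (fun x => ⨍ y in ball x r, f y ∂μ) μ := by
  have hint : AEStronglyMeasurable (fun x => ∫ y in ball x r, f y ∂μ) μ := by
    refine (((hf.comp_snd (μ := μ)).indicator (measurableSet_dist_lt r)).integral_prod_right').congr
      (ae_of_all _ fun x => ?_)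
    exact integral_indicator measurableSet_ball
  simp_rw [setAverage_eq, measureReal_def]
  exact ((measurable_measure_ball μ r).ennreal_toReal.inv.aestronglyMeasurable).smul hint

theorem lintegral_inv_measure_ball_mul_setLIntegral_le {r : ℝ} {c : ℝ≥0∞}
    (h0 : ∀ x, μ (ball x r) ≠ 0) (htop : ∀ x, μ (ball x r) ≠ ∞)
    (hcomp : ∀ x, ∀ᵐ y ∂μ.restrict (ball x r), μ (ball x r) ≤ c * μ (ball y r))
    {φ : X → ℝ≥0∞} (hφ : AEMeasurable φ μ) :
    ∫⁻ x, (μ (ball x r))⁻¹ * ∫⁻ y in ball x r, φ y ∂μ ∂μ ≤ c * ∫⁻ y, φ y ∂μ := by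
  set E := {z : X × X | dist z.2 z.1 < r}
  set K : X × X → ℝ≥0∞ := E.indicator fun z => (μ (ball z.1 r))⁻¹ * φ z.2
  have hK : AEMeasurable K (μ.prod μ) :=
    (((measurable_measure_ball μ r).comp measurable_fst).inv.aemeasurable.mul
      hφ.comp_snd).indicator (measurableSet_dist_lt r)
  have hinner : ∀ y, ∫⁻ x, K (x, y) ∂μ ≤ c * φ y := by
    intro y
    have hK_eq : (fun x => K (x, y)) = (ball y r).indicator fun x => (μ (ball x r))⁻¹ * φ y := by
      ext x
      classical
      rw [indicator_apply, mem_ball, dist_comm]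
      rfl
    calc ∫⁻ x, K (x, y) ∂μ = ∫⁻ x in ball y r, (μ (ball x r))⁻¹ * φ y ∂μ := by
          rw [hK_eq, lintegral_indicator measurableSet_ball]
      _ ≤ ∫⁻ _ in ball y r, c / μ (ball y r) * φ y ∂μ := by
          refine lintegral_mono_ae ((hcomp y).mono fun x hx => ?_)
          gcongr
          rw [ENNReal.le_div_iff_mul_le (.inl (h0 y)) (.inl (htop y)), mul_comm, ← div_eq_mul_inv]
          exact ENNReal.div_le_of_le_mul hx
      _ = c * φ y := by
          rw [setLIntegral_const, mul_right_comm, ENNReal.div_mul_cancel (h0 y) (htop y)]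
  calc ∫⁻ x, (μ (ball x r))⁻¹ * ∫⁻ y in ball x r, φ y ∂μ ∂μ = ∫⁻ x, ∫⁻ y, K (x, y) ∂μ ∂μ := by
        refine lintegral_congr fun x => ?_
        rw [← lintegral_const_mul'' _ hφ.restrict, ← lintegral_indicator measurableSet_ball]
        -- `y ∈ ball x r` unfolds to `(x, y) ∈ E`
        rfl
    _ = ∫⁻ y, ∫⁻ x, K (x, y) ∂μ ∂μ := lintegral_lintegral_swap hK
    _ ≤ ∫⁻ y, c * φ y ∂μ := lintegral_mono hinner
    _ = c * ∫⁻ y, φ y ∂μ := lintegral_const_mul'' c hφ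

end

theorem stmt_0_general {X : Type*} [MetricSpace X] [MeasurableSpace X] [BorelSpace X]
    (μ : Measure X)
    (hμ : ∀ (x : X) (r : ℝ), 0 < r → 0 < μ (ball x r) ∧ μ (ball x r) < ∞)
    (p : ℝ≥0∞) (hp1 : 1 ≤ p) (hptop : p ≠ ∞)
    (r₀ C : ℝ) (hC : 0 < C)
    (hcomp : ∀ (x : X) (r : ℝ), 0 < r → r < r₀ →
      ∀ᵐ y ∂μ.restrict (ball x r), μ (ball x r) ≤ ENNReal.ofReal C * μ (ball y r))
    (r : ℝ) (hr : 0 < r) (hrr₀ : r < r₀)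
    (f : X → ℝ) (hf : MemLp f p μ) :
    MemLp (fun x => ⨍ y in ball x r, f y ∂μ) p μ ∧
      eLpNorm (fun x => ⨍ y in ball x r, f y ∂μ) p μ ≤
        ENNReal.ofReal (C ^ (1 / p.toReal)) * eLpNorm f p μ := by
  have : SigmaFinite μ := sigmaFinite_of_measure_ball_lt_top μ fun x r hr => (hμ x r hr).2
  have : SecondCountableTopology X :=
    secondCountableTopology_of_measure_ball_pos μ fun x r hr => (hμ x r hr).1
  have hp0 : p ≠ 0 := (zero_lt_one.trans_le hp1).ne'
  have ht : 1 ≤ p.toReal := by simpa using ENNReal.toReal_mono hptop hp1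
  have h0 x : μ (ball x r) ≠ 0 := (hμ x r hr).1.ne'
  have htop x : μ (ball x r) ≠ ∞ := (hμ x r hr).2.ne
  have hnorm : eLpNorm (fun x => ⨍ y in ball x r, f y ∂μ) p μ ≤
      ENNReal.ofReal (C ^ (1 / p.toReal)) * eLpNorm f p μ := by
    rw [← ENNReal.ofReal_rpow_of_pos hC]
    refine eLpNorm_le_rpow_mul_eLpNorm_of_lintegral_le hp0 hptop ?_
    calc ∫⁻ x, ‖⨍ y in ball x r, f y ∂μ‖ₑ ^ p.toReal ∂μ
        ≤ ∫⁻ x, (μ (ball x r))⁻¹ * ∫⁻ y in ball x r, ‖f y‖ₑ ^ p.toReal ∂μ ∂μ :=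
          lintegral_mono fun x => enorm_setAverage_rpow_le μ (h0 x) (htop x) ht hf.1.restrict
      _ ≤ ENNReal.ofReal C * ∫⁻ y, ‖f y‖ₑ ^ p.toReal ∂μ :=
          lintegral_inv_measure_ball_mul_setLIntegral_le μ h0 htop (fun x => hcomp x r hr hrr₀)
            (hf.1.enorm.pow_const _)
  exact ⟨⟨aestronglyMeasurable_setAverage_ball μ hf.1 r,
    hnorm.trans_lt (ENNReal.mul_lt_top ENNReal.ofReal_lt_top hf.2)⟩, hnorm⟩

/-- On a metric measure space whose measure satisfies a uniform
comparability condition with parameters `r₀, C`, the averaging operator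
`A_r f x = ⨍_{B_r(x)} f dμ` maps `L^p` boundedly into itself with norm at most
`C^(1/p)`, for every `r ∈ (0, r₀)` and `p ∈ [1, ∞)`. -/
theorem stmt_0 {X : Type*} [MetricSpace X] [MeasurableSpace X] [BorelSpace X]
    (μ : Measure X)
    (hμ : ∀ (x : X) (r : ℝ), 0 < r → 0 < μ (ball x r) ∧ μ (ball x r) < ∞)
    (p : ℝ≥0∞) (hp1 : 1 ≤ p) (hptop : p ≠ ∞)
    (r₀ C : ℝ) (hr₀ : 0 < r₀) (hC : 0 < C)
    (hcomp : ∀ (x : X) (r : ℝ), 0 < r → r < r₀ →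
      ∀ᵐ y ∂μ.restrict (ball x r), μ (ball x r) ≤ ENNReal.ofReal C * μ (ball y r))
    (r : ℝ) (hr : 0 < r) (hrr₀ : r < r₀)
    (f : X → ℝ) (hf : MemLp f p μ) :
    MemLp (fun x => ⨍ y in ball x r, f y ∂μ) p μ ∧
      eLpNorm (fun x => ⨍ y in ball x r, f y ∂μ) p μ ≤
        ENNReal.ofReal (C ^ (1 / p.toReal)) * eLpNorm f p μ :=
  stmt_0_general μ hμ p hp1 hptop r₀ C hC hcomp r hr hrr₀ f hf
end

section
/- Let (X,d,μ) be a metric measure space and x ∈ X a point whose closed unit ball B̄₁(x) is compact. Let n be a positive integer, ω > 0, c ∈ ℝ, and S : X → ℝ a continuous function, and suppose there exist r₀ ∈ (0,1) and C > 0 such that |μ(B_r(y)) − ω rⁿ (1 − c·S(y)·r²)| ≤ C rⁿ⁺⁴ for every y ∈ B̄₁(x) and every r ∈ (0,r₀). Then: (i) sup_{y ∈ B_r(x)} |1 − μ(B_r(x))/μ(B_r(y))| = O(r²) as r ↓ 0; (ii) μ(B_{2r}(x))/μ(B_r(x)) → 2ⁿ as r ↓ 0. Consequently, for every u ∈ L¹_loc(X,μ)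 such that x is a Lebesgue point of u, |Δ_{μ,r}u(x) − Δ̃_{μ,r}u(x)| → 0 as r ↓ 0. -/
/-!
Since `S` is bounded on the compact ball `B̄₁(x)`, the expansion gives
`|μ(B_r(y)) − ω rⁿ| ≤ D r^{n+2}` uniformly for `y` near `x`, so `μ(B_r(y)) ≥ ω rⁿ / 2` for small
`r`, and any quotient `v / w` with `v = k ω rⁿ + O(r^{n+2})`, `w = ω rⁿ + O(r^{n+2})` is
`k + O(r²)`. This gives (i) with `k = 1` and (ii) with `k = 2ⁿ`. Writing
`g(y) = μ(B_r(x)) / μ(B_r(y))`, the identity `(u − c)(1 + g) = 2(u − c) − (u − c)(1 − g)` shows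
`Δ_{μ,r}u(x) − Δ̃_{μ,r}u(x) = (2r²)⁻¹ ⨍ (u − c)(1 − g)`, which by (i) is at most a constant times
`⨍ |u − c|`, and this tends to `0` at a Lebesgue point.
-/

open MeasureTheory Filter Metric Set
open scoped ENNReal Topology

/-- The AMV `r`-operator at a Lebesgue point `x` with Lebesgue value `c`. -/
noncomputable def amvOp {X : Type*} [MetricSpace X] [MeasurableSpace X]
    (μ : Measure X) (u : X → ℝ) (c : ℝ) (x : X) (r : ℝ) : ℝ :=
  (1 / r ^ 2) * ⨍ y in ball x r, (u y - c) ∂μ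

/-- The SAMV `r`-operator at a Lebesgue point `x` with Lebesgue value `c`. -/
noncomputable def samvOp {X : Type*} [MetricSpace X] [MeasurableSpace X]
    (μ : Measure X) (u : X → ℝ) (c : ℝ) (x : X) (r : ℝ) : ℝ :=
  (1 / (2 * r ^ 2)) *
    ⨍ y in ball x r, (u y - c) * (1 + (μ (ball x r)).toReal / (μ (ball y r)).toReal) ∂μ

section VolumeExpansion

variable {n : ℕ} {ω D r : ℝ}

theorem abs_sub_mul_pow_le_of_expansion {m c s M C : ℝ} (hω : 0 ≤ ω) (hC : 0 ≤ C) (hr : 0 ≤ r)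
    (hr1 : r ≤ 1) (hs : |s| ≤ M) (h : |m - ω * r ^ n * (1 - c * s * r ^ 2)| ≤ C * r ^ (n + 4)) :
    |m - ω * r ^ n| ≤ (ω * |c| * M + C) * r ^ (n + 2) := by
  have hcurv : |ω * r ^ n * (c * s * r ^ 2)| ≤ ω * |c| * M * r ^ (n + 2) := by
    rw [abs_mul, abs_mul, abs_mul, abs_mul, abs_of_nonneg hω, abs_of_nonneg (pow_nonneg hr n),
      abs_of_nonneg (pow_nonneg hr 2), pow_add]
    have := mul_le_mul_of_nonneg_left hs (abs_nonneg c)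
    have : 0 ≤ ω * r ^ n * r ^ 2 := by positivity
    nlinarith
  have hrem : C * r ^ (n + 4) ≤ C * r ^ (n + 2) :=
    mul_le_mul_of_nonneg_left (pow_le_pow_of_le_one hr hr1 (by omega)) hC
  calc |m - ω * r ^ n|
      = |(m - ω * r ^ n * (1 - c * s * r ^ 2)) - ω * r ^ n * (c * s * r ^ 2)| := by
        congr 1; ring
    _ ≤ |m - ω * r ^ n * (1 - c * s * r ^ 2)| + |ω * r ^ n * (c * s * r ^ 2)| := abs_sub _ _
    _ ≤ (ω * |c| * M + C) * r ^ (n + 2) := by linarith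

theorem abs_div_sub_le_of_approx {k D' v w : ℝ} (hω : 0 < ω) (hr : 0 < r) (hk : 0 ≤ k)
    (hsmall : D * r ^ 2 ≤ ω / 2) (hv : |v - k * (ω * r ^ n)| ≤ D' * r ^ (n + 2))
    (hw : |w - ω * r ^ n| ≤ D * r ^ (n + 2)) :
    |v / w - k| ≤ 2 * (D' + k * D) / ω * r ^ 2 := by
  have hw_ge : ω / 2 * r ^ n ≤ w := by
    have := (abs_le.1 hw).1
    rw [pow_add] at this
    nlinarith [mul_le_mul_of_nonneg_left hsmall (pow_pos hr n).le]
  have hw_pos : 0 < w := lt_of_lt_of_le (by positivity) hw_ge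
  have hnum : |v - k * w| ≤ (D' + k * D) * r ^ (n + 2) :=
    calc |v - k * w| = |(v - k * (ω * r ^ n)) - k * (w - ω * r ^ n)| := by
          congr 1; ring
      _ ≤ |v - k * (ω * r ^ n)| + k * |w - ω * r ^ n| :=
          (abs_sub _ _).trans_eq (by rw [abs_mul, abs_of_nonneg hk])
      _ ≤ (D' + k * D) * r ^ (n + 2) := by nlinarith
  calc |v / w - k| = |v - k * w| / w := by
        rw [div_sub' hw_pos.ne', abs_div, abs_of_pos hw_pos, mul_comm w]
    _ ≤ (D' + k * D) * r ^ (n + 2) / (ω / 2 * r ^ n) :=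
        div_le_div₀ ((abs_nonneg _).trans hnum) hnum (by positivity) hw_ge
    _ = 2 * (D' + k * D) / ω * r ^ 2 := by
        rw [pow_add]
        field_simp

theorem eventually_mul_sq_le (D : ℝ) {ε : ℝ} (hε : 0 < ε) : ∀ᶠ r in 𝓝 (0 : ℝ), D * r ^ 2 ≤ ε :=
  ((continuous_const.mul (continuous_pow 2)).tendsto' 0 0 (by simp)).eventually
    (eventually_le_nhds hε)

theorem tendsto_div_two_mul_of_approx {v : ℝ → ℝ} {r₀ : ℝ} (hω : 0 < ω) (hr₀ : 0 < r₀)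
    (hv : ∀ r, 0 < r → r < r₀ → |v r - ω * r ^ n| ≤ D * r ^ (n + 2)) :
    Tendsto (fun r => v (2 * r) / v r) (𝓝[>] 0) (𝓝 (2 ^ n)) := by
  set K := 2 * (D * 2 ^ (n + 2) + 2 ^ n * D) / ω
  have hbound : ∀ᶠ r in 𝓝[>] 0, |v (2 * r) / v r - 2 ^ n| ≤ K * r ^ 2 := by
    filter_upwards [Ioo_mem_nhdsGT (half_pos hr₀),
      nhdsWithin_le_nhds (eventually_mul_sq_le D (half_pos hω))] with r ⟨hr, hr₀'⟩ hsmall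
    have hv2 : |v (2 * r) - 2 ^ n * (ω * r ^ n)| ≤ D * 2 ^ (n + 2) * r ^ (n + 2) := by
      have := hv (2 * r) (by positivity) (by linarith)
      rwa [mul_pow, mul_pow, mul_left_comm, ← mul_assoc D] at this
    exact abs_div_sub_le_of_approx hω hr (by positivity) hsmall hv2 (hv r hr (by linarith))
  rw [← tendsto_sub_nhds_zero_iff]
  refine squeeze_zero_norm' (by simpa only [Real.norm_eq_abs] using hbound) ?_
  exact ((continuous_const.mul (continuous_pow 2)).tendsto' 0 0 (by simp)).mono_left
    nhdsWithin_le_nhds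

theorem eventually_forall_ball_abs_one_sub_div_le {X : Type*} [PseudoMetricSpace X]
    {v : X → ℝ → ℝ} {x : X} {s : Set X} {r₀ : ℝ} (hs : s ∈ 𝓝 x) (hω : 0 < ω) (hr₀ : 0 < r₀)
    (hv : ∀ y ∈ s, ∀ r, 0 < r → r < r₀ → |v y r - ω * r ^ n| ≤ D * r ^ (n + 2)) :
    ∀ᶠ r in 𝓝[>] 0, ∀ y ∈ ball x r, |1 - v x r / v y r| ≤ 4 * D / ω * r ^ 2 := by
  obtain ⟨δ, hδ, hball⟩ := Metric.mem_nhds_iff.1 hs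
  filter_upwards [Ioo_mem_nhdsGT (lt_min hδ hr₀),
    nhdsWithin_le_nhds (eventually_mul_sq_le D (half_pos hω))] with r ⟨hr, hrδ⟩ hsmall y hy
  have hvx : |v x r - 1 * (ω * r ^ n)| ≤ D * r ^ (n + 2) := by
    simpa using hv x (mem_of_mem_nhds hs) r hr (hrδ.trans_le (min_le_right _ _))
  have hvy := hv y (hball (ball_subset_ball (hrδ.le.trans (min_le_left _ _)) hy)) r hr
    (hrδ.trans_le (min_le_right _ _))
  rw [abs_sub_comm]
  exact (abs_div_sub_le_of_approx hω hr zero_le_one hsmall hvx hvy).trans_eq (by ring)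

end VolumeExpansion

theorem lowerSemicontinuous_measure_ball {X : Type*} [PseudoMetricSpace X] [MeasurableSpace X]
    (μ : Measure X) (r : ℝ) : LowerSemicontinuous fun y : X => μ (ball y r) := by
  intro y a ha
  have hunion : ball y r = ⋃ k : ℕ, ball y (r - 1 / (k + 1)) := by
    refine Subset.antisymm (fun z hz => ?_) (iUnion_subset fun k => ball_subset_ball ?_)
    · obtain ⟨k, hk⟩ := exists_nat_one_div_lt (sub_pos.2 (mem_ball.1 hz))
      exact mem_iUnion.2 ⟨k, mem_ball.2 (by linarith)⟩
    · simp only [sub_le_self_iff]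
      positivity
  have hmono : Monotone fun k : ℕ => ball y (r - 1 / (k + 1)) := fun j k hjk =>
    ball_subset_ball (sub_le_sub_left (Nat.one_div_le_one_div hjk) r)
  -- by continuity from below, `a < μ(B_{r - 1/(k+1)}(y))` for some `k`, and that ball lies in
  -- `B_r(z)` whenever `d(y, z) < 1/(k+1)`
  have ha' : a < μ (ball y r) := ha
  rw [hunion, hmono.measure_iUnion] at ha'
  obtain ⟨k, hk⟩ := lt_iSup_iff.1 ha'
  filter_upwards [ball_mem_nhds y (Nat.one_div_pos_of_nat (n := k))] with z hz
  exact hk.trans_le (measure_mono (ball_subset_ball' (by rw [dist_comm]; linarith [mem_ball.1 hz])))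

theorem abs_setAverage_mul_le {X : Type*} [MeasurableSpace X] {μ : Measure X} {s : Set X}
    {f g : X → ℝ} {ε : ℝ} (hs : MeasurableSet s) (hf : IntegrableOn f s μ)
    (hg : ∀ y ∈ s, |g y| ≤ ε) :
    |⨍ y in s, f y * g y ∂μ| ≤ ε * ⨍ y in s, |f y| ∂μ := by
  have hint : |∫ y in s, f y * g y ∂μ| ≤ ε * ∫ y in s, |f y| ∂μ := by
    rw [← Real.norm_eq_abs]
    refine (norm_integral_le_of_norm_le (hf.abs.const_mul ε) ((ae_restrict_iff' hs).2 ?_)).trans_eq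
      (integral_const_mul ε _)
    filter_upwards with y hy
    rw [norm_mul, Real.norm_eq_abs, Real.norm_eq_abs, mul_comm]
    exact mul_le_mul_of_nonneg_right (hg y hy) (abs_nonneg _)
  rw [setAverage_eq, setAverage_eq, smul_eq_mul, smul_eq_mul, abs_mul,
    abs_of_nonneg (inv_nonneg.2 measureReal_nonneg), mul_left_comm]
  exact mul_le_mul_of_nonneg_left hint (inv_nonneg.2 measureReal_nonneg)

section MeanValueOperators

variable {X : Type*} [MetricSpace X] [MeasurableSpace X] {μ : Measure X} {u : X → ℝ} {c : ℝ}
  {x : X}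

theorem abs_amvOp_sub_samvOp_le [OpensMeasurableSpace X] {r ε : ℝ} (hfin : μ (ball x r) ≠ ∞)
    (hu : IntegrableOn u (ball x r) μ)
    (hε : ∀ y ∈ ball x r, |1 - (μ (ball x r)).toReal / (μ (ball y r)).toReal| ≤ ε) :
    |amvOp μ u c x r - samvOp μ u c x r| ≤ ε / (2 * r ^ 2) * ⨍ y in ball x r, |u y - c| ∂μ := by
  set g : X → ℝ := fun y => (μ (ball x r)).toReal / (μ (ball y r)).toReal
  have hf : IntegrableOn (fun y => u y - c) (ball x r) μ := hu.sub (integrableOn_const hfin)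
  have hg : Measurable g :=
    measurable_const.div (ENNReal.measurable_toReal.comp
      (lowerSemicontinuous_measure_ball μ r).measurable)
  have hfg : IntegrableOn (fun y => (u y - c) * (1 - g y)) (ball x r) μ :=
    hf.mul_bdd (measurable_const.sub hg).aestronglyMeasurable
      ((ae_restrict_iff' measurableSet_ball).2 (ae_of_all _ hε))
  have hdiff : amvOp μ u c x r - samvOp μ u c x r =
      1 / (2 * r ^ 2) * ⨍ y in ball x r, (u y - c) * (1 - g y) ∂μ := by
    have hsplit : ∫ y in ball x r, (u y - c) * (1 + g y) ∂μ =
        2 * ∫ y in ball x r, (u y - c) ∂μ - ∫ y in ball x r, (u y - c) * (1 - g y) ∂μ := by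
      rw [← integral_const_mul, ← integral_sub (hf.const_mul 2) hfg]
      congr 1 with y
      ring
    simp only [amvOp, samvOp, setAverage_eq, smul_eq_mul]
    rw [hsplit]
    ring
  rw [hdiff, abs_mul, abs_of_nonneg (by positivity), div_eq_mul_one_div ε, mul_comm ε, mul_assoc]
  exact mul_le_mul_of_nonneg_left (abs_setAverage_mul_le measurableSet_ball hf hε) (by positivity)

theorem tendsto_abs_amvOp_sub_samvOp [OpensMeasurableSpace X] {K : ℝ}
    (hfin : ∀ r, 0 < r → μ (ball x r) ≠ ∞) (hu : LocallyIntegrable u μ)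
    (hratio : ∀ᶠ r in 𝓝[>] 0, ∀ y ∈ ball x r,
      |1 - (μ (ball x r)).toReal / (μ (ball y r)).toReal| ≤ K * r ^ 2)
    (hLeb : Tendsto (fun r => ⨍ y in ball x r, |u y - c| ∂μ) (𝓝[>] 0) (𝓝 0)) :
    Tendsto (fun r => |amvOp μ u c x r - samvOp μ u c x r|) (𝓝[>] 0) (𝓝 0) := by
  obtain ⟨s, hs, hus⟩ := hu x
  obtain ⟨δ, hδ, hball⟩ := Metric.mem_nhds_iff.1 hs
  have hbound : ∀ᶠ r in 𝓝[>] 0, |amvOp μ u c x r - samvOp μ u c x r| ≤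
      K / 2 * ⨍ y in ball x r, |u y - c| ∂μ := by
    filter_upwards [hratio, Ioo_mem_nhdsGT hδ] with r hr ⟨hr0, hrδ⟩
    calc _ ≤ K * r ^ 2 / (2 * r ^ 2) * ⨍ y in ball x r, |u y - c| ∂μ :=
          abs_amvOp_sub_samvOp_le (hfin r hr0)
            (hus.mono_set ((ball_subset_ball hrδ.le).trans hball)) hr
      _ = K / 2 * ⨍ y in ball x r, |u y - c| ∂μ := by field_simp
  exact squeeze_zero' (.of_forall fun r => abs_nonneg _) hbound
    (by simpa using hLeb.const_mul (K / 2))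

end MeanValueOperators

theorem stmt_7_general {X : Type*} [MetricSpace X] [MeasurableSpace X] [BorelSpace X]
    (μ : Measure X)
    (hμ : ∀ (x : X) (r : ℝ), 0 < r → 0 < μ (ball x r) ∧ μ (ball x r) < ∞)
    (x : X) (hcpt : IsCompact (closedBall x 1))
    (n : ℕ) (ω : ℝ) (hω : 0 < ω) (c : ℝ)
    (S : X → ℝ) (hS : Continuous S)
    (r₀ C : ℝ) (hr₀ : 0 < r₀) (hr₀1 : r₀ < 1) (hC : 0 < C)
    (hexp : ∀ y ∈ closedBall x 1, ∀ r : ℝ, 0 < r → r < r₀ →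
      |(μ (ball y r)).toReal - ω * r ^ n * (1 - c * S y * r ^ 2)| ≤ C * r ^ (n + 4)) :
    (∃ K r₁ : ℝ, 0 < K ∧ 0 < r₁ ∧ ∀ r : ℝ, 0 < r → r < r₁ → ∀ y ∈ ball x r,
      |1 - (μ (ball x r)).toReal / (μ (ball y r)).toReal| ≤ K * r ^ 2) ∧
    Tendsto (fun r => (μ (ball x (2 * r))).toReal / (μ (ball x r)).toReal)
      (𝓝[>] (0 : ℝ)) (𝓝 (2 ^ n)) ∧
    ∀ (u : X → ℝ), LocallyIntegrable u μ → ∀ c' : ℝ,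
      Tendsto (fun r => ⨍ y in ball x r, |u y - c'| ∂μ) (𝓝[>] (0 : ℝ)) (𝓝 0) →
      Tendsto (fun r => |amvOp μ u c' x r - samvOp μ u c' x r|) (𝓝[>] (0 : ℝ)) (𝓝 0) := by
  obtain ⟨M, hM⟩ := hcpt.exists_bound_of_continuousOn hS.continuousOn
  have hM0 : 0 ≤ M := (norm_nonneg _).trans (hM x (mem_closedBall_self zero_le_one))
  have hvol : ∀ y ∈ closedBall x 1, ∀ r : ℝ, 0 < r → r < r₀ →
      |(μ (ball y r)).toReal - ω * r ^ n| ≤ (ω * |c| * M + C) * r ^ (n + 2) :=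
    fun y hy r hr hrr => abs_sub_mul_pow_le_of_expansion hω.le hC.le hr.le (hrr.trans hr₀1).le
      (hM y hy) (hexp y hy r hr hrr)
  have hratio := eventually_forall_ball_abs_one_sub_div_le (closedBall_mem_nhds x one_pos) hω hr₀
    hvol
  obtain ⟨r₁, hr₁, hr₁ratio⟩ := (nhdsGT_basis 0).eventually_iff.1 hratio
  exact ⟨⟨_, r₁, by positivity, hr₁, fun r hr hrr => hr₁ratio ⟨hr, hrr⟩⟩,
    tendsto_div_two_mul_of_approx hω hr₀ (hvol x (mem_closedBall_self zero_le_one)),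
    fun u hu c' hLeb => tendsto_abs_amvOp_sub_samvOp (fun r hr => (hμ x r hr).2.ne) hu hratio hLeb⟩

/-- (Abstract Riemannian volume expansion.)  Suppose the closed unit ball of
`x` is compact and `|μ(B_r(y)) − ω rⁿ (1 − c S(y) r²)| ≤ C r^{n+4}` for all `y ∈ B̄₁(x)` and
`r ∈ (0, r₀)`, with `S` continuous.  Then (i) `sup_{y ∈ B_r(x)} |1 − μ(B_r(x))/μ(B_r(y))| = O(r²)`;
(ii) `μ(B_{2r}(x))/μ(B_r(x)) → 2ⁿ`; and consequently at every Lebesgue point `x` of any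
`u ∈ L¹_loc`, `|Δ_{μ,r}u(x) − Δ̃_{μ,r}u(x)| → 0` as `r ↓ 0`. -/
theorem stmt_7 {X : Type*} [MetricSpace X] [MeasurableSpace X] [BorelSpace X]
    (μ : Measure X)
    (hμ : ∀ (x : X) (r : ℝ), 0 < r → 0 < μ (ball x r) ∧ μ (ball x r) < ∞)
    (x : X) (hcpt : IsCompact (closedBall x 1))
    (n : ℕ) (hn : 0 < n) (ω : ℝ) (hω : 0 < ω) (c : ℝ)
    (S : X → ℝ) (hS : Continuous S)
    (r₀ C : ℝ) (hr₀ : 0 < r₀) (hr₀1 : r₀ < 1) (hC : 0 < C)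
    (hexp : ∀ y ∈ closedBall x 1, ∀ r : ℝ, 0 < r → r < r₀ →
      |(μ (ball y r)).toReal - ω * r ^ n * (1 - c * S y * r ^ 2)| ≤ C * r ^ (n + 4)) :
    (∃ K r₁ : ℝ, 0 < K ∧ 0 < r₁ ∧ ∀ r : ℝ, 0 < r → r < r₁ → ∀ y ∈ ball x r,
      |1 - (μ (ball x r)).toReal / (μ (ball y r)).toReal| ≤ K * r ^ 2) ∧
    Tendsto (fun r => (μ (ball x (2 * r))).toReal / (μ (ball x r)).toReal)
      (𝓝[>] (0 : ℝ)) (𝓝 (2 ^ n)) ∧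
    ∀ (u : X → ℝ), LocallyIntegrable u μ → ∀ c' : ℝ,
      Tendsto (fun r => ⨍ y in ball x r, |u y - c'| ∂μ) (𝓝[>] (0 : ℝ)) (𝓝 0) →
      Tendsto (fun r => |amvOp μ u c' x r - samvOp μ u c' x r|) (𝓝[>] (0 : ℝ)) (𝓝 0) :=
  stmt_7_general μ hμ x hcpt n ω hω c S hS r₀ C hr₀ hr₀1 hC hexp
end

section
/- Let (X,d,μ) be a locally compact metric measure space such that μ satisfies a locally uniform comparability condition. Then for every compact set K ⊆ X there exist constants r_K > 0 and C_K > 0 such that for every r ∈ (0,r_K): ∫_K z_r dμ ≤ (1 + C_K) · μ(⋃_{x ∈ K} B_r(x)) < ∞. In particular, for every compact K the functions z_r are integrable on K for all sufficiently small r. -/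
open MeasureTheory Filter Metric Set
open scoped ENNReal Topology

/-- The averaged absolute distortion `z_r(x) = ⨍_{B_r(x)} |1 − μ(B_r(x))/μ(B_r(y))| dμ(y)`. -/
noncomputable def zr {X : Type*} [MetricSpace X] [MeasurableSpace X]
    (μ : Measure X) (x : X) (r : ℝ) : ℝ :=
  ⨍ y in ball x r, |1 - (μ (ball x r)).toReal / (μ (ball y r)).toReal| ∂μ

lemma zr_le_of_comp {X : Type*} [MetricSpace X] [MeasurableSpace X]
    (μ : Measure X)
    (hμ : ∀ (x : X) (r : ℝ), 0 < r → 0 < μ (ball x r) ∧ μ (ball x r) < ∞)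
    {x : X} {r C : ℝ} (hr : 0 < r) (hC : 0 < C)
    (h : ∀ᵐ y ∂μ.restrict (ball x r), μ (ball x r) ≤ ENNReal.ofReal C * μ (ball y r)) :
    zr μ x r ≤ 1 + C := by
  have hB0 : 0 < (μ (ball x r)).toReal :=
    ENNReal.toReal_pos (hμ x r hr).1.ne' (hμ x r hr).2.ne
  have hpt : ∀ᵐ y ∂μ.restrict (ball x r),
      |1 - (μ (ball x r)).toReal / (μ (ball y r)).toReal| ≤ 1 + C := by
    filter_upwards [h] with y hy
    have hy0 : 0 < (μ (ball y r)).toReal :=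
      ENNReal.toReal_pos (hμ y r hr).1.ne' (hμ y r hr).2.ne
    have hle : (μ (ball x r)).toReal ≤ C * (μ (ball y r)).toReal := by
      have h1 : (μ (ball x r)).toReal ≤ (ENNReal.ofReal C * μ (ball y r)).toReal :=
        ENNReal.toReal_mono
          (ENNReal.mul_ne_top ENNReal.ofReal_ne_top (hμ y r hr).2.ne) hy
      rwa [ENNReal.toReal_mul, ENNReal.toReal_ofReal hC.le] at h1
    have hdiv : (μ (ball x r)).toReal / (μ (ball y r)).toReal ≤ C :=
      (div_le_iff₀ hy0).2 hle
    have hnn : 0 ≤ (μ (ball x r)).toReal / (μ (ball y r)).toReal := by positivity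
    calc |1 - (μ (ball x r)).toReal / (μ (ball y r)).toReal|
        ≤ |(1:ℝ)| + |(μ (ball x r)).toReal / (μ (ball y r)).toReal| := abs_sub _ _
      _ = 1 + (μ (ball x r)).toReal / (μ (ball y r)).toReal := by
          rw [abs_one, abs_of_nonneg hnn]
      _ ≤ 1 + C := by linarith
  unfold zr
  rw [setAverage_eq]
  by_cases hint : Integrable
      (fun y => |1 - (μ (ball x r)).toReal / (μ (ball y r)).toReal|) (μ.restrict (ball x r))
  · have hcst : Integrable (fun _ : X => (1 : ℝ) + C) (μ.restrict (ball x r)) := by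
      have : Fact (μ (ball x r) < ∞) := ⟨(hμ x r hr).2⟩
      exact integrable_const _
    have hI : ∫ y in ball x r, |1 - (μ (ball x r)).toReal / (μ (ball y r)).toReal| ∂μ
        ≤ ∫ _ in ball x r, (1 + C) ∂μ := integral_mono_ae hint hcst hpt
    rw [setIntegral_const] at hI
    rw [smul_eq_mul]
    calc (μ (ball x r)).toReal⁻¹ *
          ∫ y in ball x r, |1 - (μ (ball x r)).toReal / (μ (ball y r)).toReal| ∂μ
        ≤ (μ (ball x r)).toReal⁻¹ * ((μ (ball x r)).toReal • (1 + C)) := by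
          apply mul_le_mul_of_nonneg_left hI (by positivity)
      _ = 1 + C := by
          rw [smul_eq_mul, ← mul_assoc, inv_mul_cancel₀ hB0.ne']
          ring
  · rw [integral_undef hint, smul_zero]
    positivity

lemma biUnion_ball_lt_top {X : Type*} [MetricSpace X] [MeasurableSpace X]
    (μ : Measure X)
    (hμ : ∀ (x : X) (r : ℝ), 0 < r → 0 < μ (ball x r) ∧ μ (ball x r) < ∞)
    {K : Set X} (hK : IsCompact K) {r : ℝ} (hr : 0 < r) :
    μ (⋃ x ∈ K, ball x r) < ∞ := by
  obtain ⟨t, ht⟩ := hK.elim_finite_subcover (fun x => ball x r)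
    (fun _ => isOpen_ball) (fun x hx => mem_iUnion.2 ⟨x, mem_ball_self hr⟩)
  have hsub : (⋃ x ∈ K, ball x r) ⊆ ⋃ i ∈ t, ball i (2 * r) := by
    intro y hy
    obtain ⟨x, hx, hyx⟩ := mem_iUnion₂.1 hy
    obtain ⟨i, hi, hxi⟩ := mem_iUnion₂.1 (ht hx)
    refine mem_iUnion₂.2 ⟨i, hi, ?_⟩
    have : dist y i ≤ dist y x + dist x i := dist_triangle _ _ _
    simp only [mem_ball] at *
    linarith
  calc μ (⋃ x ∈ K, ball x r) ≤ μ (⋃ i ∈ t, ball i (2 * r)) := measure_mono hsub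
    _ ≤ ∑ i ∈ t, μ (ball i (2 * r)) := measure_biUnion_finset_le t _
    _ < ∞ := ENNReal.sum_lt_top.2 fun i _ => (hμ i (2 * r) (by linarith)).2


/-- On a locally compact metric measure space satisfying a locally uniform
comparability condition, for every compact set `K` there are `r_K, C_K > 0` such that for
every `r ∈ (0, r_K)`: `∫_K z_r dμ ≤ (1 + C_K) μ(⋃_{x ∈ K} B_r(x)) < ∞`.  In particular `z_r`
is integrable on `K` for all small `r`. -/
theorem stmt_10 {X : Type*} [MetricSpace X] [MeasurableSpace X] [BorelSpace X]
    [LocallyCompactSpace X]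
    (μ : Measure X)
    (hμ : ∀ (x : X) (r : ℝ), 0 < r → 0 < μ (ball x r) ∧ μ (ball x r) < ∞)
    (hcomp : ∀ x₀ : X, ∃ V ∈ 𝓝 x₀, ∃ r₀ C : ℝ, 0 < r₀ ∧ 0 < C ∧
      ∀ᵐ x ∂μ.restrict V, ∀ r : ℝ, 0 < r → r < r₀ →
        ∀ᵐ y ∂μ.restrict (ball x r), μ (ball x r) ≤ ENNReal.ofReal C * μ (ball y r))
    (K : Set X) (hK : IsCompact K) :
    ∃ rK CK : ℝ, 0 < rK ∧ 0 < CK ∧ ∀ r : ℝ, 0 < r → r < rK →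
      (∫⁻ x in K, ENNReal.ofReal (zr μ x r) ∂μ ≤
        ENNReal.ofReal (1 + CK) * μ (⋃ x ∈ K, ball x r)) ∧
      μ (⋃ x ∈ K, ball x r) < ∞ := by
  rcases K.eq_empty_or_nonempty with rfl | hKne
  · refine ⟨1, 1, one_pos, one_pos, fun r hr _ => ?_⟩
    simp
  choose V hV r₀ C hr₀ hC hae using hcomp
  obtain ⟨t, ht⟩ := hK.elim_finite_subcover (fun x => interior (V x))
    (fun _ => isOpen_interior)
    (fun x hx => mem_iUnion.2 ⟨x, mem_interior_iff_mem_nhds.2 (hV x)⟩)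
  have htne : t.Nonempty := by
    obtain ⟨x, hx⟩ := hKne
    obtain ⟨i, hi, _⟩ := mem_iUnion₂.1 (ht hx)
    exact ⟨i, hi⟩
  set rK := t.inf' htne r₀ with hrK
  set CK := t.sup' htne C with hCK
  have hrKpos : 0 < rK := by
    rw [hrK, Finset.lt_inf'_iff]
    exact fun i _ => hr₀ i
  have hCKpos : 0 < CK := by
    obtain ⟨i, hi⟩ := htne
    exact lt_of_lt_of_le (hC i) (Finset.le_sup' C hi)
  refine ⟨rK, CK, hrKpos, hCKpos, fun r hr hrlt => ?_⟩
  refine ⟨?_, biUnion_ball_lt_top μ hμ hK hr⟩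
  -- a.e. on K, zr is bounded by 1 + CK
  have haeK : ∀ᵐ x ∂μ.restrict K, zr μ x r ≤ 1 + CK := by
    have h1 : ∀ᵐ x ∂μ, ∀ i ∈ (t : Set X), x ∈ interior (V i) →
        ∀ s : ℝ, 0 < s → s < r₀ i →
          ∀ᵐ y ∂μ.restrict (ball x s), μ (ball x s) ≤ ENNReal.ofReal (C i) * μ (ball y s) := by
      rw [ae_ball_iff t.countable_toSet]
      intro i _
      have h2 : ∀ᵐ x ∂μ.restrict (interior (V i)), ∀ s : ℝ, 0 < s → s < r₀ i →
          ∀ᵐ y ∂μ.restrict (ball x s), μ (ball x s) ≤ ENNReal.ofReal (C i) * μ (ball y s) :=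
        (hae i).filter_mono (ae_mono (Measure.restrict_mono interior_subset le_rfl))
      exact (ae_restrict_iff' isOpen_interior.measurableSet).1 h2
    filter_upwards [ae_restrict_of_ae h1, ae_restrict_mem hK.measurableSet] with x hx hxK
    obtain ⟨i, hi, hxi⟩ := mem_iUnion₂.1 (ht hxK)
    have hri : r < r₀ i := lt_of_lt_of_le hrlt (Finset.inf'_le _ hi)
    have hae2 := hx i (Finset.mem_coe.2 hi) hxi r hr hri
    refine zr_le_of_comp μ hμ hr hCKpos ?_
    filter_upwards [hae2] with y hy
    exact hy.trans (mul_le_mul_left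
      (ENNReal.ofReal_le_ofReal (Finset.le_sup' C hi)) _)
  calc ∫⁻ x in K, ENNReal.ofReal (zr μ x r) ∂μ
      ≤ ∫⁻ _ in K, ENNReal.ofReal (1 + CK) ∂μ := by
        refine lintegral_mono_ae ?_
        filter_upwards [haeK] with x hx
        exact ENNReal.ofReal_le_ofReal hx
    _ = ENNReal.ofReal (1 + CK) * μ K := setLIntegral_const _ _
    _ ≤ ENNReal.ofReal (1 + CK) * μ (⋃ x ∈ K, ball x r) := by
        refine mul_le_mul_right (measure_mono fun x hx => ?_) _
        exact mem_biUnion hx (mem_ball_self hr)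
end

section
/- Let (X,d,μ) be a locally compact metric measure space such that μ satisfies a locally uniform comparability condition. Then for every compact set K ⊆ X there exist constants r_K, C_K > 0 and a compact set K' ⊆ X containing K such that for every f ∈ L^∞_loc(X,μ): sup_{r ∈ (0,r_K)} ‖A_r* f − f‖_{L^∞(K,μ)} ≤ C_K ‖f‖_{L^∞(K',μ)}, where A_r* f(x) := ∫_{B_r(x)} f(y) / μ(B_r(y)) dμ(y). -/
/-!
On a compact set `K` the local comparability constants can be made uniform: `K` is covered by
finitely many neighbourhoods, and one takes the least radius and the largest constant. Then for
`r < r₀` and a.e. `x ∈ K`, the integrand of `A_r* f (x)` is a.e. bounded by `C ‖f‖_∞ / μ(B_r(x))`,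
so `|A_r* f (x)| ≤ C ‖f‖_∞`, where the sup norm is taken over a fixed compact `δ`-thickening `K'`
of `K` containing every ball `B_r(x)`, `x ∈ K`, `r < δ`.
-/

open MeasureTheory Filter Metric Set
open scoped ENNReal Topology

/-- The adjoint averaging operator `A_r* f (x) = ∫_{B_r(x)} f(y)/μ(B_r(y)) dμ(y)`. -/
noncomputable def Astar {X : Type*} [MetricSpace X] [MeasurableSpace X]
    (μ : Measure X) (f : X → ℝ) (r : ℝ) (x : X) : ℝ :=
  ∫ y in ball x r, f y / (μ (ball y r)).toReal ∂μ

section BallsComparable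

variable {X : Type*} [MetricSpace X] [MeasurableSpace X] {μ : Measure X}

def BallsComparableOn (μ : Measure X) (s : Set X) (r₀ C : ℝ) : Prop :=
  ∀ᵐ x ∂μ.restrict s, ∀ r : ℝ, 0 < r → r < r₀ →
    ∀ᵐ y ∂μ.restrict (ball x r), μ (ball x r) ≤ ENNReal.ofReal C * μ (ball y r)

theorem BallsComparableOn.mono {s t : Set X} {r₀ r₁ C D : ℝ} (h : BallsComparableOn μ t r₀ C)
    (hst : s ⊆ t) (hr : r₁ ≤ r₀) (hC : C ≤ D) : BallsComparableOn μ s r₁ D := by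
  refine ae_mono (Measure.restrict_mono hst le_rfl) (Filter.Eventually.mono h ?_)
  intro x hx r hr₀ hr₁
  exact (hx r hr₀ (hr₁.trans_le hr)).mono fun y hy => hy.trans (by gcongr)

theorem BallsComparableOn.union {s t : Set X} {r₀ r₁ C D : ℝ} (hs : BallsComparableOn μ s r₀ C)
    (ht : BallsComparableOn μ t r₁ D) : BallsComparableOn μ (s ∪ t) (min r₀ r₁) (max C D) :=
  (ae_restrict_union_iff _ _ _).2
    ⟨hs.mono subset_rfl (min_le_left _ _) (le_max_left _ _),
      ht.mono subset_rfl (min_le_right _ _) (le_max_right _ _)⟩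

theorem IsCompact.exists_ballsComparableOn
    (hloc : ∀ x₀ : X, ∃ V ∈ 𝓝 x₀, ∃ r₀ C : ℝ, 0 < r₀ ∧ 0 < C ∧ BallsComparableOn μ V r₀ C)
    {K : Set X} (hK : IsCompact K) :
    ∃ r₀ C : ℝ, 0 < r₀ ∧ 0 < C ∧ BallsComparableOn μ K r₀ C := by
  refine hK.induction_on ⟨1, 1, one_pos, one_pos, by simp [BallsComparableOn]⟩ ?_ ?_ ?_
  · rintro s t hst ⟨r₀, C, hr₀, hC, ht⟩
    exact ⟨r₀, C, hr₀, hC, ht.mono hst le_rfl le_rfl⟩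
  · rintro s t ⟨r₀, C, hr₀, hC, hs⟩ ⟨r₁, D, hr₁, -, ht⟩
    exact ⟨_, _, lt_min hr₀ hr₁, lt_max_of_lt_left hC, hs.union ht⟩
  · intro x _
    obtain ⟨V, hV, hcomp⟩ := hloc x
    exact ⟨V, mem_nhdsWithin_of_mem_nhds hV, hcomp⟩

end BallsComparable

theorem norm_div_toReal_le_of_le_mul {a b : ℝ≥0∞} {u C M : ℝ} (ha : 0 < a) (ha' : a ≠ ∞)
    (hC : 0 ≤ C) (hab : a ≤ ENNReal.ofReal C * b) (hu : ‖u‖ ≤ M) :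
    ‖u / b.toReal‖ ≤ C * M / a.toReal := by
  have hM : 0 ≤ M := (norm_nonneg u).trans hu
  have ha₀ : 0 < a.toReal := ENNReal.toReal_pos ha.ne' ha'
  rcases eq_or_ne b ∞ with rfl | hb'
  · simp only [ENNReal.toReal_top, div_zero, norm_zero]
    positivity
  have hb : b ≠ 0 := by
    rintro rfl
    simp only [mul_zero, nonpos_iff_eq_zero] at hab
    exact ha.ne' hab
  have hb₀ : 0 < b.toReal := ENNReal.toReal_pos hb hb'
  have hab' : a.toReal ≤ C * b.toReal := by
    simpa [ENNReal.toReal_mul, ENNReal.toReal_ofReal hC] using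
      ENNReal.toReal_mono (ENNReal.mul_ne_top ENNReal.ofReal_ne_top hb') hab
  rw [norm_div, Real.norm_of_nonneg hb₀.le, div_le_div_iff₀ hb₀ ha₀]
  calc ‖u‖ * a.toReal ≤ M * (C * b.toReal) := by gcongr
    _ = C * M * b.toReal := by ring

theorem norm_Astar_le {X : Type*} [MetricSpace X] [MeasurableSpace X] {μ : Measure X}
    {f : X → ℝ} {x : X} {r C M : ℝ} (hC : 0 ≤ C) (hx : 0 < μ (ball x r))
    (hx' : μ (ball x r) < ∞) (hf : ∀ᵐ y ∂μ.restrict (ball x r), ‖f y‖ ≤ M)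
    (hcomp : ∀ᵐ y ∂μ.restrict (ball x r), μ (ball x r) ≤ ENNReal.ofReal C * μ (ball y r)) :
    ‖Astar μ f r x‖ ≤ C * M := by
  have hbound := norm_setIntegral_le_of_norm_le_const_ae hx' <|
    (hf.and hcomp).mono fun y hy => norm_div_toReal_le_of_le_mul hx hx'.ne hC hy.2 hy.1
  rwa [measureReal_def, div_mul_cancel₀ _ (ENNReal.toReal_pos hx.ne' hx'.ne).ne'] at hbound

theorem ae_norm_le_toReal_eLpNorm_top {α : Type*} [MeasurableSpace α] {μ : Measure α}
    {f : α → ℝ} (hf : eLpNorm f ∞ μ ≠ ∞) : ∀ᵐ y ∂μ, ‖f y‖ ≤ (eLpNorm f ∞ μ).toReal := by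
  filter_upwards [ae_le_eLpNormEssSup (f := f) (μ := μ)] with y hy
  rw [← eLpNorm_exponent_top] at hy
  simpa using ENNReal.toReal_mono hf hy

/-- On a locally compact metric measure space satisfying a locally uniform
comparability condition, for every compact `K` there are `r_K, C_K > 0` and a compact
`K' ⊇ K` such that for every `f ∈ L^∞_loc(X,μ)`:
`sup_{r ∈ (0,r_K)} ‖A_r* f − f‖_{L^∞(K,μ)} ≤ C_K ‖f‖_{L^∞(K',μ)}`. -/
theorem stmt_11 {X : Type*} [MetricSpace X] [MeasurableSpace X] [BorelSpace X]
    [LocallyCompactSpace X]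
    (μ : Measure X)
    (hμ : ∀ (x : X) (r : ℝ), 0 < r → 0 < μ (ball x r) ∧ μ (ball x r) < ∞)
    (hcomp : ∀ x₀ : X, ∃ V ∈ 𝓝 x₀, ∃ r₀ C : ℝ, 0 < r₀ ∧ 0 < C ∧
      ∀ᵐ x ∂μ.restrict V, ∀ r : ℝ, 0 < r → r < r₀ →
        ∀ᵐ y ∂μ.restrict (ball x r), μ (ball x r) ≤ ENNReal.ofReal C * μ (ball y r))
    (K : Set X) (hK : IsCompact K) :
    ∃ rK CK : ℝ, 0 < rK ∧ 0 < CK ∧ ∃ K' : Set X, IsCompact K' ∧ K ⊆ K' ∧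
      ∀ f : X → ℝ, AEMeasurable f μ →
        (∀ x : X, ∃ V ∈ 𝓝 x, eLpNorm f ∞ (μ.restrict V) < ∞) →
        ∀ r : ℝ, 0 < r → r < rK →
          eLpNorm (fun x => Astar μ f r x - f x) ∞ (μ.restrict K) ≤
            ENNReal.ofReal CK * eLpNorm f ∞ (μ.restrict K') := by
  obtain ⟨δ, hδ, hK'⟩ := hK.exists_isCompact_cthickening
  obtain ⟨r₀, C, hr₀, hC, hKcomp⟩ := hK.exists_ballsComparableOn hcomp
  refine ⟨min δ r₀, C + 1, lt_min hδ hr₀, by linarith, _, hK', self_subset_cthickening K, ?_⟩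
  intro f _ _ r hr hrK
  set M := eLpNorm f ∞ (μ.restrict (cthickening δ K))
  rcases eq_or_ne M ∞ with hM | hM
  · rw [hM, ENNReal.mul_top (by simpa using by linarith)]
    exact le_top
  have hfM : ∀ᵐ y ∂μ.restrict (cthickening δ K), ‖f y‖ ≤ M.toReal :=
    ae_norm_le_toReal_eLpNorm_top hM
  have hball : ∀ x ∈ K, ball x r ⊆ cthickening δ K := fun x hx =>
    (ball_subset_thickening hx r).trans
      (thickening_subset_cthickening_of_le (hrK.le.trans (min_le_left _ _)) K)
  have hpointwise : ∀ᵐ x ∂μ.restrict K, ‖Astar μ f r x - f x‖ ≤ (C + 1) * M.toReal := by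
    filter_upwards [ae_restrict_mem hK.measurableSet,
      ae_mono (Measure.restrict_mono (self_subset_cthickening K) le_rfl) hfM, hKcomp]
      with x hxK hfx hcx
    have hA := norm_Astar_le hC.le (hμ x r hr).1 (hμ x r hr).2
      (ae_mono (Measure.restrict_mono (hball x hxK) le_rfl) hfM)
      (hcx r hr (hrK.trans_le (min_le_right _ _)))
    calc ‖Astar μ f r x - f x‖ ≤ ‖Astar μ f r x‖ + ‖f x‖ := norm_sub_le _ _
      _ ≤ C * M.toReal + M.toReal := add_le_add hA hfx
      _ = (C + 1) * M.toReal := by ring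
  calc eLpNorm (fun x => Astar μ f r x - f x) ∞ (μ.restrict K)
      ≤ ENNReal.ofReal ((C + 1) * M.toReal) := by
        rw [eLpNorm_exponent_top]
        exact eLpNormEssSup_le_of_ae_bound hpointwise
    _ = ENNReal.ofReal (C + 1) * M := by
        rw [ENNReal.ofReal_mul (by linarith), ENNReal.ofReal_toReal hM]
end

section
/- Let n ≥ 2, R > 0, let f : [0,R] → [0,∞) be measurable with ∫₀^s f(ρ)ρ^{n−1} dρ ∈ (0,∞) for every s ∈ (0,R], and let g ∈ L¹(𝕊^{n−1}, σ) be nonnegative with ∫_{𝕊^{n−1}} g dσ > 0, where σ is the surface measure on the unit Euclidean sphere 𝕊^{n−1}. Define w(x) := f(|x|)·g(x/|x|) for x ∈ B_R(0)∖{0} (Euclidean balls) and μ := w·𝓛ⁿ restricted to B_R(0). Then for every vector v ∈ ℝⁿ: (i) if ⟨v, ∫_{𝕊^{n−1}} θ·g(θ) dσ(θ)⟩ = 0, then r^{−2} ⨍_{B_r(0)} ⟨v, x⟩ dμ(x) → 0 as r ↓ 0; (ii) if ⟨v, ∫_{𝕊^{n−1}} θ·g(θ) dσ(θ)⟩ ≠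 0, then limsup_{r ↓ 0} |r^{−2} ⨍_{B_r(0)} ⟨v, x⟩ dμ(x)| = +∞, so in particular r^{−2} ⨍_{B_r(0)} ⟨v, x⟩ dμ(x) does not converge as r ↓ 0. -/
open MeasureTheory Filter Metric Set
open scoped ENNReal Topology RealInnerProductSpace

/-!
In polar coordinates `x = ρθ` the measure `μ` restricted to `B_r(0)` is the product of
`g(θ) dσ(θ)` and `f(ρ) ρ^{n-1} dρ` on `(0, r)`, while `⟨v, x⟩ = ρ ⟨v, θ⟩`. Hence for `0 < r ≤ R`
`r⁻² ⨍_{B_r(0)} ⟨v, x⟩ dμ = (⟨v, ∫ θ g dσ⟩ / ∫ g dσ) · F₂(r) / (r² F(r))` with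
`F(r) = ∫₀^r f ρ^{n-1} dρ` and `F₂(r) = ∫₀^r f ρ^n dρ`, which settles (i).
For (ii) the ratio `F₂(r) / (r² F(r))` is unbounded as `r ↓ 0`: if `F₂ ≤ C r² F` on `(0, r₀]`, then
`F(r) - F(r/2) ≤ (2/r) F₂(r) ≤ 2Cr F(r)`, so along `r₀ / 2^k` the function `F` stays above
`(1 - 4Cr₀) F(r₀) > 0`, contradicting `F(0+) = 0`.
-/

lemma mul_le_apply_div_two_pow {F : ℝ → ℝ} {a r₀ : ℝ} (ha : 0 ≤ a) (hr₀ : 0 < r₀)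
    (har₀ : a * r₀ ≤ 1) (hF : 0 ≤ F r₀)
    (hstep : ∀ r ∈ Ioc 0 r₀, (1 - a * r) * F r ≤ F (r / 2)) (k : ℕ) :
    (1 - 2 * a * r₀ + 2 * a * (r₀ / 2 ^ k)) * F r₀ ≤ F (r₀ / 2 ^ k) := by
  induction k with
  | zero => simp
  | succ k ih =>
    set r := r₀ / 2 ^ k
    have hr : r ∈ Ioc 0 r₀ := ⟨by positivity, div_le_self hr₀.le (one_le_pow₀ one_le_two)⟩
    have har : a * r ≤ 1 := (mul_le_mul_of_nonneg_left hr.2 ha).trans har₀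
    rw [pow_succ, ← div_div]
    -- `(1 - a r) (1 - 2 a r₀ + 2 a r) - (1 - 2 a r₀ + a r) = 2 a² r (r₀ - r) ≥ 0`
    nlinarith [hstep r hr, mul_le_mul_of_nonneg_left ih (by linarith : 0 ≤ 1 - a * r),
      mul_nonneg (mul_nonneg (mul_nonneg ha hr.1.le) (mul_nonneg ha (sub_nonneg.2 hr.2))) hF]

lemma one_sub_mul_integral_le_integral_half {h : ℝ → ℝ} {C r : ℝ} (hr : 0 < r)
    (hh : IntegrableOn h (Ioc 0 r)) (hnn : ∀ t ∈ Ioc 0 r, 0 ≤ h t)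
    (hmom : ∫ t in Ioc 0 r, h t * t ≤ C * r ^ 2 * ∫ t in Ioc 0 r, h t) :
    (1 - 2 * C * r) * ∫ t in Ioc 0 r, h t ≤ ∫ t in Ioc 0 (r / 2), h t := by
  have hsub : Ioc (r / 2) r ⊆ Ioc 0 r := Ioc_subset_Ioc_left (by positivity)
  have hmom_int : IntegrableOn (fun t ↦ h t * t) (Ioc 0 r) :=
    hh.mul_continuousOn_of_subset continuousOn_id measurableSet_Ioc isCompact_Icc
      Ioc_subset_Icc_self
  have hsplit :
      ∫ t in Ioc 0 r, h t = (∫ t in Ioc 0 (r / 2), h t) + ∫ t in Ioc (r / 2) r, h t := by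
    rw [← setIntegral_union (Ioc_disjoint_Ioc_of_le le_rfl) measurableSet_Ioc
      (hh.mono_set (Ioc_subset_Ioc_right (by linarith))) (hh.mono_set hsub),
      Ioc_union_Ioc_eq_Ioc (by positivity) (by linarith)]
  have hupper : r / 2 * ∫ t in Ioc (r / 2) r, h t ≤ ∫ t in Ioc 0 r, h t * t := calc
    r / 2 * ∫ t in Ioc (r / 2) r, h t = ∫ t in Ioc (r / 2) r, r / 2 * h t :=
      (integral_const_mul _ _).symm
    _ ≤ ∫ t in Ioc (r / 2) r, h t * t :=
      setIntegral_mono_on ((hh.mono_set hsub).const_mul _) (hmom_int.mono_set hsub)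
        measurableSet_Ioc fun t ht ↦ by nlinarith [hnn t (hsub ht), ht.1]
    _ ≤ ∫ t in Ioc 0 r, h t * t :=
      setIntegral_mono_set hmom_int
        (ae_restrict_of_forall_mem measurableSet_Ioc fun t ht ↦ mul_nonneg (hnn t ht) ht.1.le)
        hsub.eventuallyLE
  nlinarith

lemma tendsto_setIntegral_Ioc_zero_nhdsGT {h : ℝ → ℝ} {R : ℝ} (hR : 0 < R)
    (hh : IntegrableOn h (Ioc 0 R)) :
    Tendsto (fun s ↦ ∫ t in Ioc 0 s, h t) (𝓝[>] 0) (𝓝 0) := by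
  have hcont := intervalIntegral.continuousOn_primitive_interval' (a := 0)
    ((intervalIntegrable_iff_integrableOn_Ioc_of_le hR.le).2 hh) left_mem_uIcc
  rw [uIcc_of_le hR.le] at hcont
  have := ((hcont 0 (left_mem_Icc.2 hR.le)).tendsto.mono_left
    (nhdsWithin_mono _ Ioc_subset_Icc_self))
  rw [nhdsWithin_Ioc_eq_nhdsGT hR, intervalIntegral.integral_same] at this
  refine this.congr' (eventually_nhdsWithin_of_forall fun s hs ↦ ?_)
  exact intervalIntegral.integral_of_le (le_of_lt hs)

lemma frequently_lt_integral_mul_id_div {h : ℝ → ℝ} {R : ℝ} (hR : 0 < R)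
    (hh : IntegrableOn h (Ioc 0 R)) (hnn : ∀ t ∈ Ioc 0 R, 0 ≤ h t)
    (hpos : ∀ s ∈ Ioc 0 R, 0 < ∫ t in Ioc 0 s, h t) (C : ℝ) :
    ∃ᶠ r in 𝓝[>] 0, C < (∫ t in Ioc 0 r, h t * t) / (r ^ 2 * ∫ t in Ioc 0 r, h t) := by
  intro hle
  obtain ⟨r₁, hr₁, hle⟩ := mem_nhdsGT_iff_exists_Ioo_subset.1 hle
  set c := max C 1
  have hc : 0 < c := one_pos.trans_le (le_max_right C 1)
  set r₀ := min (r₁ / 2) (min R (1 / (8 * c)))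
  have hr₀ : 0 < r₀ := lt_min (half_pos hr₁) (lt_min hR (by positivity))
  have hr₀r₁ : r₀ < r₁ := (min_le_left _ _).trans_lt (half_lt_self hr₁)
  have hr₀R : r₀ ≤ R := (min_le_right _ _).trans (min_le_left _ _)
  have hcr₀ : 8 * c * r₀ ≤ 1 := by
    have : r₀ ≤ 1 / (8 * c) := (min_le_right _ _).trans (min_le_right _ _)
    rwa [le_div_iff₀' (by positivity)] at this
  have hsub : ∀ {r}, r ∈ Ioc 0 r₀ → r ∈ Ioc 0 R := fun hr ↦ ⟨hr.1, hr.2.trans hr₀R⟩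
  have hstep : ∀ r ∈ Ioc 0 r₀,
      (1 - 2 * c * r) * (∫ t in Ioc 0 r, h t) ≤ ∫ t in Ioc 0 (r / 2), h t := by
    intro r hr
    refine one_sub_mul_integral_le_integral_half hr.1
      (hh.mono_set (Ioc_subset_Ioc_right (hsub hr).2))
      (fun t ht ↦ hnn t ⟨ht.1, ht.2.trans (hsub hr).2⟩) ?_
    have hr2 : (∫ t in Ioc 0 r, h t * t) / (r ^ 2 * ∫ t in Ioc 0 r, h t) ≤ C :=
      not_lt.1 (hle ⟨hr.1, hr.2.trans_lt hr₀r₁⟩)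
    rw [div_le_iff₀ (mul_pos (pow_pos hr.1 2) (hpos r (hsub hr)))] at hr2
    nlinarith [le_max_left C 1, mul_pos (pow_pos hr.1 2) (hpos r (hsub hr))]
  have hlower : ∀ k : ℕ,
      (1 - 4 * c * r₀) * ∫ t in Ioc 0 r₀, h t ≤ ∫ t in Ioc 0 (r₀ / 2 ^ k), h t := by
    intro k
    have := mul_le_apply_div_two_pow (by positivity) hr₀ (by nlinarith)
      (hpos r₀ ⟨hr₀, hr₀R⟩).le hstep k
    nlinarith [mul_nonneg (mul_nonneg hc.le (div_pos hr₀ (pow_pos two_pos k)).le)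
      (hpos r₀ ⟨hr₀, hr₀R⟩).le]
  have hlim : Tendsto (fun k : ℕ ↦ r₀ / 2 ^ k) atTop (𝓝[>] 0) :=
    tendsto_nhdsWithin_of_tendsto_nhds_of_eventually_within _
      (tendsto_const_nhds.div_atTop (tendsto_pow_atTop_atTop_of_one_lt one_lt_two))
      (Eventually.of_forall fun k ↦ div_pos hr₀ (pow_pos two_pos k))
  have := ge_of_tendsto ((tendsto_setIntegral_Ioc_zero_nhdsGT hR hh).comp hlim)
    (Eventually.of_forall hlower)
  nlinarith [hpos r₀ ⟨hr₀, hr₀R⟩]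

lemma integral_withDensity_ofReal {X F : Type*} [MeasurableSpace X] [NormedAddCommGroup F]
    [NormedSpace ℝ F] {ν : Measure X} {w : X → ℝ} (hw : AEMeasurable w ν) (hw0 : 0 ≤ᵐ[ν] w)
    (u : X → F) :
    ∫ x, u x ∂ν.withDensity (fun x ↦ ENNReal.ofReal (w x)) = ∫ x, w x • u x ∂ν := by
  rw [integral_withDensity_eq_integral_toReal_smul₀ hw.ennreal_ofReal
    (ae_of_all _ fun _ ↦ ENNReal.ofReal_lt_top)]
  refine integral_congr_ae ?_
  filter_upwards [hw0] with x hx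
  rw [ENNReal.toReal_ofReal hx]

lemma integral_volumeIoiPow (m : ℕ) (φ : ℝ → ℝ) :
    ∫ y : Ioi (0 : ℝ), φ y ∂Measure.volumeIoiPow m = ∫ y in Ioi (0 : ℝ), y ^ m * φ y := by
  simp only [Measure.volumeIoiPow, ENNReal.ofReal]
  rw [integral_withDensity_eq_integral_smul (measurable_subtype_coe.pow_const _).real_toNNReal,
    integral_subtype_comap measurableSet_Ioi fun y ↦ Real.toNNReal (y ^ m) • φ y]
  refine setIntegral_congr_fun measurableSet_Ioi fun y hy ↦ ?_
  rw [NNReal.smul_def, Real.coe_toNNReal _ (pow_nonneg (le_of_lt hy) _), smul_eq_mul]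

section Polar

variable {E : Type*} [NormedAddCommGroup E] [NormedSpace ℝ E] [FiniteDimensional ℝ E]
  [MeasurableSpace E] [BorelSpace E] [Nontrivial E] (μ : Measure E) [μ.IsAddHaarMeasure]

lemma integral_fun_norm_mul_fun_unit_addHaar (φ : ℝ → ℝ) (ψ : E → ℝ) :
    ∫ x, φ ‖x‖ * ψ (‖x‖⁻¹ • x) ∂μ =
      (∫ θ : sphere (0 : E) 1, ψ θ ∂μ.toSphere) *
        ∫ y in Ioi (0 : ℝ), y ^ (Module.finrank ℝ E - 1) * φ y := calc
  _ = ∫ x : ({0}ᶜ : Set E), φ ‖x.1‖ * ψ (‖x.1‖⁻¹ • x.1) ∂μ.comap (↑) := by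
    rw [integral_subtype_comap (measurableSet_singleton _).compl
      fun x ↦ φ ‖x‖ * ψ (‖x‖⁻¹ • x), restrict_compl_singleton]
  _ = ∫ p, ψ p.1 * φ p.2 ∂μ.toSphere.prod (.volumeIoiPow (Module.finrank ℝ E - 1)) := by
    rw [← μ.measurePreserving_homeomorphUnitSphereProd.integral_comp
      (Homeomorph.measurableEmbedding _)]
    simp [mul_comm]
  _ = _ := by
    rw [integral_prod_mul (fun θ : sphere (0 : E) 1 ↦ ψ θ) (fun y : Ioi (0 : ℝ) ↦ φ y),
      integral_volumeIoiPow]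

lemma setIntegral_ball_fun_norm_mul_fun_unit_addHaar (φ : ℝ → ℝ) (ψ : E → ℝ) (r : ℝ) :
    ∫ x in ball (0 : E) r, φ ‖x‖ * ψ (‖x‖⁻¹ • x) ∂μ =
      (∫ θ : sphere (0 : E) 1, ψ θ ∂μ.toSphere) *
        ∫ y in Ioc 0 r, y ^ (Module.finrank ℝ E - 1) * φ y := by
  have hind : (ball (0 : E) r).indicator (fun x ↦ φ ‖x‖ * ψ (‖x‖⁻¹ • x)) =
      fun x ↦ (Iio r).indicator φ ‖x‖ * ψ (‖x‖⁻¹ • x) := by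
    ext x
    by_cases hx : ‖x‖ < r <;> simp [indicator, hx]
  rw [← integral_indicator measurableSet_ball, hind, integral_fun_norm_mul_fun_unit_addHaar]
  congr 1
  rw [← setIntegral_congr_set Ioo_ae_eq_Ioc, ← Ioi_inter_Iio,
    ← setIntegral_indicator measurableSet_Iio]
  refine setIntegral_congr_fun measurableSet_Ioi fun y _ ↦ ?_
  by_cases hy : y < r <;> simp [indicator, hy]

lemma aemeasurable_comp_unit_addHaar {ψ : E → ℝ}
    (hψ : AEMeasurable (fun θ : sphere (0 : E) 1 ↦ ψ θ) μ.toSphere) :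
    AEMeasurable (fun x ↦ ψ (‖x‖⁻¹ • x)) μ := by
  rw [← restrict_compl_singleton (μ := μ) 0,
    aemeasurable_restrict_iff_comap_subtype (measurableSet_singleton _).compl]
  have := hψ.comp_quasiMeasurePreserving <| Measure.quasiMeasurePreserving_fst.comp
    μ.measurePreserving_homeomorphUnitSphereProd.quasiMeasurePreserving
  simpa [Function.comp_def] using this

variable {μ} {f : ℝ → ℝ} {g w : E → ℝ} {R r : ℝ}

lemma setIntegral_ball_withDensity_separable (hf : Measurable f) (hf0 : ∀ ρ, 0 ≤ f ρ)
    (hg0 : ∀ θ ∈ sphere (0 : E) 1, 0 ≤ g θ)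
    (hg : AEMeasurable (fun θ : sphere (0 : E) 1 ↦ g θ) μ.toSphere)
    (hw : ∀ x, x ≠ 0 → w x = f ‖x‖ * g (‖x‖⁻¹ • x)) (hr : r ≤ R) (u : E → ℝ) :
    ∫ x in ball 0 r, u x ∂(μ.restrict (ball 0 R)).withDensity (fun x ↦ ENNReal.ofReal (w x)) =
      ∫ x in ball 0 r, f ‖x‖ * g (‖x‖⁻¹ • x) * u x ∂μ := by
  rw [restrict_withDensity measurableSet_ball, Measure.restrict_restrict measurableSet_ball,
    inter_eq_left.2 (ball_subset_ball hr)]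
  have hw_ae : w =ᵐ[μ.restrict (ball 0 r)] fun x ↦ f ‖x‖ * g (‖x‖⁻¹ • x) := by
    refine ae_restrict_of_ae ?_
    filter_upwards [compl_mem_ae_iff.2 (measure_singleton (0 : E))] with x hx
    exact hw x hx
  have hW0 : 0 ≤ᵐ[μ.restrict (ball 0 r)] w := by
    refine ae_restrict_of_ae ?_
    filter_upwards [compl_mem_ae_iff.2 (measure_singleton (0 : E))] with x hx
    rw [Pi.zero_apply, hw x hx]
    refine mul_nonneg (hf0 _) (hg0 _ ?_)
    rw [mem_sphere_zero_iff_norm, norm_smul, norm_inv, norm_norm,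
      inv_mul_cancel₀ (norm_ne_zero_iff.2 hx)]
  have hW : AEMeasurable w (μ.restrict (ball 0 r)) :=
    ((hf.comp measurable_norm).aemeasurable.mul (aemeasurable_comp_unit_addHaar μ hg)).restrict
      |>.congr hw_ae.symm
  rw [integral_withDensity_ofReal hW hW0]
  refine integral_congr_ae ?_
  filter_upwards [hw_ae] with x hx
  rw [hx, smul_eq_mul]

end Polar

lemma integral_mul_inner_sphere {E : Type*} [NormedAddCommGroup E] [InnerProductSpace ℝ E]
    [CompleteSpace E] [SecondCountableTopology E] [MeasurableSpace E] [OpensMeasurableSpace E]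
    {ν : Measure (sphere (0 : E) 1)} {g : E → ℝ}
    (hg : Integrable (fun θ : sphere (0 : E) 1 ↦ g θ) ν) (v : E) :
    ∫ θ : sphere (0 : E) 1, g θ * ⟪v, θ⟫ ∂ν = ⟪v, ∫ θ : sphere (0 : E) 1, g θ • (θ : E) ∂ν⟫ := by
  have hint : Integrable (fun θ : sphere (0 : E) 1 ↦ g θ • (θ : E)) ν :=
    hg.smul_of_top_left (memLp_top_of_bound continuous_subtype_val.aestronglyMeasurable 1
      (ae_of_all _ fun θ ↦ (norm_eq_of_mem_sphere θ).le))
  simp_rw [← integral_inner hint, real_inner_smul_right]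

section SeparableWeight

variable {E : Type*} [NormedAddCommGroup E] [InnerProductSpace ℝ E] [FiniteDimensional ℝ E]
  [MeasurableSpace E] [BorelSpace E] [Nontrivial E] {μ : Measure E} [μ.IsAddHaarMeasure]
  {f : ℝ → ℝ} {g w : E → ℝ} {R r : ℝ}

lemma setAverage_inner_ball_withDensity_separable (hf : Measurable f) (hf0 : ∀ ρ, 0 ≤ f ρ)
    (hg0 : ∀ θ ∈ sphere (0 : E) 1, 0 ≤ g θ)
    (hg : AEMeasurable (fun θ : sphere (0 : E) 1 ↦ g θ) μ.toSphere)
    (hw : ∀ x, x ≠ 0 → w x = f ‖x‖ * g (‖x‖⁻¹ • x)) (hr : r ≤ R) (v : E) :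
    ⨍ x in ball 0 r, ⟪v, x⟫ ∂(μ.restrict (ball 0 R)).withDensity (fun x ↦ ENNReal.ofReal (w x)) =
      (∫ θ : sphere (0 : E) 1, g θ * ⟪v, θ⟫ ∂μ.toSphere) *
          (∫ t in Ioc 0 r, f t * t ^ (Module.finrank ℝ E - 1) * t) /
        ((∫ θ : sphere (0 : E) 1, g θ ∂μ.toSphere) *
          ∫ t in Ioc 0 r, f t * t ^ (Module.finrank ℝ E - 1)) := by
  have hmass := setIntegral_ball_withDensity_separable hf hf0 hg0 hg hw hr (fun _ ↦ 1)
  have hmoment := setIntegral_ball_withDensity_separable hf hf0 hg0 hg hw hr (⟪v, ·⟫)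
  have hsep : ∀ x : E, f ‖x‖ * g (‖x‖⁻¹ • x) * ⟪v, x⟫ =
      (f ‖x‖ * ‖x‖) * (g (‖x‖⁻¹ • x) * ⟪v, ‖x‖⁻¹ • x⟫) := by
    intro x
    rcases eq_or_ne x 0 with rfl | hx
    · simp
    · rw [real_inner_smul_right]
      field_simp [norm_ne_zero_iff.2 hx]
  simp only [setIntegral_const, smul_eq_mul, mul_one] at hmass
  simp only [hsep] at hmoment
  rw [setAverage_eq, hmass, hmoment, smul_eq_mul, inv_mul_eq_div,
    setIntegral_ball_fun_norm_mul_fun_unit_addHaar μ f g r,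
    (setIntegral_ball_fun_norm_mul_fun_unit_addHaar μ (fun t ↦ f t * t)
      (fun θ ↦ g θ * ⟪v, θ⟫) r :)]
  congr 3 <;> ext t <;> ring

end SeparableWeight

/-- Let `n ≥ 2`, `R > 0`, `f : [0,R] → [0,∞)` measurable with
`∫₀^s f(ρ)ρ^{n−1} dρ ∈ (0,∞)` for `s ∈ (0,R]`, and `g ∈ L¹(𝕊^{n−1},σ)` nonnegative with
`∫ g dσ > 0`, where `σ` is the surface measure on the unit sphere.  For the separable weight
`w(x) = f(|x|) g(x/|x|)` and `μ = w 𝓛ⁿ ⌞ B_R(0)`, for every `v ∈ ℝⁿ`: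
(i) if `⟨v, ∫ θ g(θ) dσ⟩ = 0` then `r⁻² ⨍_{B_r(0)} ⟨v,x⟩ dμ → 0` as `r ↓ 0`;
(ii) if `⟨v, ∫ θ g(θ) dσ⟩ ≠ 0` then `limsup_{r↓0} |r⁻² ⨍_{B_r(0)} ⟨v,x⟩ dμ| = +∞`, and in
particular the quantity does not converge as `r ↓ 0`. -/
theorem stmt_19 {n : ℕ} (hn : 2 ≤ n) (R : ℝ) (hR : 0 < R)
    (f : ℝ → ℝ) (hf_meas : Measurable f) (hf_nonneg : ∀ ρ, 0 ≤ f ρ)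
    (hf_int : ∀ s : ℝ, 0 < s → s ≤ R →
      IntegrableOn (fun ρ => f ρ * ρ ^ (n - 1)) (Ioc 0 s) volume ∧
      0 < ∫ ρ in Ioc (0 : ℝ) s, f ρ * ρ ^ (n - 1))
    (g : EuclideanSpace ℝ (Fin n) → ℝ)
    (hg_nonneg : ∀ θ ∈ sphere (0 : EuclideanSpace ℝ (Fin n)) 1, 0 ≤ g θ)
    (hg_int : Integrable (fun θ : sphere (0 : EuclideanSpace ℝ (Fin n)) 1 => g ↑θ)
      ((volume : Measure (EuclideanSpace ℝ (Fin n))).toSphere))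
    (hg_pos : 0 < ∫ θ : sphere (0 : EuclideanSpace ℝ (Fin n)) 1, g ↑θ
      ∂((volume : Measure (EuclideanSpace ℝ (Fin n))).toSphere))
    (w : EuclideanSpace ℝ (Fin n) → ℝ)
    (hw : ∀ x : EuclideanSpace ℝ (Fin n), x ≠ 0 → w x = f ‖x‖ * g (‖x‖⁻¹ • x))
    (μ : Measure (EuclideanSpace ℝ (Fin n)))
    (hμdef : μ = (volume.restrict (ball (0 : EuclideanSpace ℝ (Fin n)) R)).withDensity
      fun x => ENNReal.ofReal (w x))
    (v : EuclideanSpace ℝ (Fin n)) :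
    (⟪v, ∫ θ : sphere (0 : EuclideanSpace ℝ (Fin n)) 1, g ↑θ • (↑θ : EuclideanSpace ℝ (Fin n))
        ∂((volume : Measure (EuclideanSpace ℝ (Fin n))).toSphere)⟫ = 0 →
      Tendsto (fun r : ℝ => (1 / r ^ 2) *
          ⨍ x in ball (0 : EuclideanSpace ℝ (Fin n)) r, ⟪v, x⟫ ∂μ)
        (𝓝[>] (0 : ℝ)) (𝓝 0)) ∧
    (⟪v, ∫ θ : sphere (0 : EuclideanSpace ℝ (Fin n)) 1, g ↑θ • (↑θ : EuclideanSpace ℝ (Fin n))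
        ∂((volume : Measure (EuclideanSpace ℝ (Fin n))).toSphere)⟫ ≠ 0 →
      (∀ M : ℝ, ∃ᶠ r in 𝓝[>] (0 : ℝ), M < |(1 / r ^ 2) *
          ⨍ x in ball (0 : EuclideanSpace ℝ (Fin n)) r, ⟪v, x⟫ ∂μ|) ∧
      ¬ ∃ L : ℝ, Tendsto (fun r : ℝ => (1 / r ^ 2) *
          ⨍ x in ball (0 : EuclideanSpace ℝ (Fin n)) r, ⟪v, x⟫ ∂μ)
        (𝓝[>] (0 : ℝ)) (𝓝 L)) := by
  have : Nontrivial (EuclideanSpace ℝ (Fin n)) :=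
    Module.nontrivial_of_finrank_pos (R := ℝ) (by rw [finrank_euclideanSpace_fin]; omega)
  set σ := (volume : Measure (EuclideanSpace ℝ (Fin n))).toSphere
  set G := ∫ θ : sphere (0 : EuclideanSpace ℝ (Fin n)) 1, g θ ∂σ
  set I := ⟪v, ∫ θ : sphere (0 : EuclideanSpace ℝ (Fin n)) 1,
    g θ • (θ : EuclideanSpace ℝ (Fin n)) ∂σ⟫
  set ratio := fun r : ℝ ↦ (∫ t in Ioc 0 r, f t * t ^ (n - 1) * t) /
    (r ^ 2 * ∫ t in Ioc 0 r, f t * t ^ (n - 1))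
  have hquot : (fun r : ℝ ↦ (1 / r ^ 2) *
      ⨍ x in ball (0 : EuclideanSpace ℝ (Fin n)) r, ⟪v, x⟫ ∂μ) =ᶠ[𝓝[>] 0]
        fun r ↦ I / G * ratio r := by
    filter_upwards [Ioc_mem_nhdsGT hR] with r hr
    rw [hμdef, setAverage_inner_ball_withDensity_separable hf_meas hf_nonneg hg_nonneg
      hg_int.1.aemeasurable hw hr.2, integral_mul_inner_sphere hg_int, finrank_euclideanSpace_fin]
    simp only [G, I, ratio, σ]
    ring
  refine ⟨fun hI ↦ ?_, fun hI ↦ ?_⟩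
  · rw [tendsto_congr' hquot, hI]
    simp
  · have hIG : 0 < |I| / G := div_pos (abs_pos.2 hI) hg_pos
    have hfreq : ∀ M : ℝ, ∃ᶠ r in 𝓝[>] (0 : ℝ), M < |I / G * ratio r| := fun M ↦
      (frequently_lt_integral_mul_id_div hR (hf_int R hR le_rfl).1
        (fun t ht ↦ mul_nonneg (hf_nonneg t) (pow_nonneg ht.1.le _))
        (fun s hs ↦ (hf_int s hs.1 hs.2).2) (M / (|I| / G))).mono fun r hM ↦ by
          rw [abs_mul, abs_div, abs_of_pos hg_pos]
          exact ((div_lt_iff₀' hIG).1 hM).trans_le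
            (mul_le_mul_of_nonneg_left (le_abs_self _) hIG.le)
    refine ⟨fun M ↦ ((hfreq M).and_eventually hquot).mono fun r ⟨hM, hr⟩ ↦
      (congrArg (M < |·|) hr).mpr hM, ?_⟩
    rintro ⟨L, hL⟩
    obtain ⟨r, hbig, hsmall⟩ := ((hfreq (|L| + 1)).and_eventually
      ((hL.congr' hquot).abs.eventually_lt_const (lt_add_one _))).exists
    exact hbig.not_gt hsmall
end
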